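/- (Local frustration-freeness of the AKLT chain.) Let H : Matrix (Fin 3 × Fin 3) (Fin 3 × Fin 3) ℂ be the AKLT two-site Hamiltonian H = (1/2)(M + (1/3)·M·M) + (1/3)·1, where M = S_x⊗S_x + S_y⊗S_y + S_z⊗S_z (Kronecker products). Then for all m₁, m₂ : Fin 3, Σ_{l₁, l₂ : Fin 3} H (m₁,m₂) (l₁,l₂) • (B l₁ · B l₂) = 0 as a 2×2 complex matrix. -/

import Mathlib

/-!
`H = (M + 1)(M + 2)/6` is the projector onto total spin 2: `M` acts as `-1` on antisymmetric
two-site vectors (total spin 1) and as `-2` on the singlet (total spin 0). The tensors `B` satisfy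
the Clifford relations `B a * B b + B b * B a = -2 s(a, b) • 1`, `s` the unnormalised singlet, so
`B a * B b = [B a, B b]/2 - s(a, b) • 1`. Every linear functional of `B a * B b` is thus an
antisymmetric vector plus a multiple of the singlet, and both are annihilated by `H`.
-/

open Matrix
open scoped Kronecker

noncomputable section

/-- Pauli matrix `X` -/
def X : Matrix (Fin 2) (Fin 2) ℂ := !![0, 1; 1, 0]

/-- Pauli matrix `Z` -/
def Z : Matrix (Fin 2) (Fin 2) ℂ := !![1, 0; 0, -1]

/-- spin-1 matrix `S_x = (1/√2)·!![0,1,0;1,0,1;0,1,0]` -/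
def Sx : Matrix (Fin 3) (Fin 3) ℂ :=
  (1 / (Real.sqrt 2 : ℂ)) • !![0, 1, 0; 1, 0, 1; 0, 1, 0]

/-- spin-1 matrix `S_y = (−i/√2)·!![0,1,0;−1,0,1;0,−1,0]` -/
def Sy : Matrix (Fin 3) (Fin 3) ℂ :=
  (-Complex.I / (Real.sqrt 2 : ℂ)) • !![0, 1, 0; -1, 0, 1; 0, -1, 0]

/-- spin-1 matrix `S_z` (the `Fin 3` index labels the `S_z`-eigenbasis `+1, 0, −1`) -/
def Sz : Matrix (Fin 3) (Fin 3) ℂ := !![1, 0, 0; 0, 0, 0; 0, 0, -1]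

/-- the Heisenberg coupling `M = S_x⊗S_x + S_y⊗S_y + S_z⊗S_z` (Kronecker products) -/
def M : Matrix (Fin 3 × Fin 3) (Fin 3 × Fin 3) ℂ := Sx ⊗ₖ Sx + Sy ⊗ₖ Sy + Sz ⊗ₖ Sz

/-- the AKLT two-site Hamiltonian `H = (1/2)(M + (1/3)·M·M) + (1/3)·1` -/
def H : Matrix (Fin 3 × Fin 3) (Fin 3 × Fin 3) ℂ :=
  (1 / 2 : ℂ) • (M + (1 / 3 : ℂ) • (M * M)) + (1 / 3 : ℂ) • 1

/-- the AKLT matrix-product tensors in the `S_z`-eigenbasis: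
`B 0 = (X·Z − X)/√2`, `B 1 = Z`, `B 2 = (X + X·Z)/√2` -/
def B : Fin 3 → Matrix (Fin 2) (Fin 2) ℂ :=
  ![(1 / (Real.sqrt 2 : ℂ)) • (X * Z - X), Z, (1 / (Real.sqrt 2 : ℂ)) • (X + X * Z)]

end

/-- `S₊ / √2`, where `S₊ = S_x + i S_y` is the spin-1 raising operator. -/
def Raise : Matrix (Fin 3) (Fin 3) ℂ := !![0, 1, 0; 0, 0, 1; 0, 0, 0]

lemma ofReal_sqrt_two_sq : (Real.sqrt 2 : ℂ) ^ 2 = 2 := by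
  rw [← Complex.ofReal_pow, Real.sq_sqrt zero_le_two, Complex.ofReal_ofNat]

lemma Sx_eq : Sx = (1 / (Real.sqrt 2 : ℂ)) • (Raise + Raiseᵀ) := by
  rw [Sx]; congr 1; ext i j; fin_cases i <;> fin_cases j <;> simp [Raise]

lemma Sy_eq : Sy = (-Complex.I / (Real.sqrt 2 : ℂ)) • (Raise + (-1 : ℂ) • Raiseᵀ) := by
  rw [Sy]; congr 1; ext i j; fin_cases i <;> fin_cases j <;> simp [Raise]

lemma M_eq_kronecker : M = Sz ⊗ₖ Sz + Raise ⊗ₖ Raiseᵀ + Raiseᵀ ⊗ₖ Raise := by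
  simp only [M, Sx_eq, Sy_eq, smul_kronecker, kronecker_smul, smul_smul,
    add_kronecker, kronecker_add]
  match_scalars <;> field_simp <;> simp only [Complex.I_sq, ofReal_sqrt_two_sq] <;> ring

lemma H_mulVec_of_M_mulVec {v : Fin 3 × Fin 3 → ℂ} {c : ℂ} (hv : M *ᵥ v = c • v) :
    H *ᵥ v = ((c + 1) * (c + 2) / 6) • v := by
  simp only [H, add_mulVec, smul_mulVec, ← mulVec_mulVec, hv, mulVec_smul, one_mulVec, smul_smul]
  match_scalars
  ring

/-- The unnormalised singlet `|+1,-1⟩ - |0,0⟩ + |-1,+1⟩`. -/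
def singlet : Fin 3 × Fin 3 → ℂ := fun p => !![0, 0, 1; 0, -1, 0; 1, 0, 0] p.1 p.2

lemma M_mulVec_singlet : M *ᵥ singlet = (-2 : ℂ) • singlet := by
  funext ⟨a, b⟩
  fin_cases a <;> fin_cases b <;>
    simp [M_eq_kronecker, mulVec, dotProduct, Fintype.sum_prod_type, Fin.sum_univ_three, Raise, Sz,
      singlet] <;> norm_num

lemma M_mulVec_of_antisymm {v : Fin 3 × Fin 3 → ℂ} (hv : ∀ a b, v (b, a) = -v (a, b)) :
    M *ᵥ v = (-1 : ℂ) • v := by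
  have hdiag (a : Fin 3) : v (a, a) = 0 := self_eq_neg.mp (hv a a)
  have h10 := hv 0 1
  have h20 := hv 0 2
  have h21 := hv 1 2
  funext ⟨a, b⟩
  fin_cases a <;> fin_cases b <;>
    simp [M_eq_kronecker, mulVec, dotProduct, Fintype.sum_prod_type, Fin.sum_univ_three, Raise, Sz,
      hdiag, h10, h20, h21]

section Clifford

variable {A : Type*} [Ring A] [Algebra ℂ A] (T : Fin 3 → A)

lemma H_mulVec_dual_mul_of_anticomm
    (hT : ∀ a b, T a * T b + T b * T a = (-2 * singlet (a, b)) • 1) (φ : Module.Dual ℂ A) :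
    H *ᵥ (fun l => φ (T l.1 * T l.2)) = 0 := by
  have hdecomp : (fun l : Fin 3 × Fin 3 => φ (T l.1 * T l.2)) =
      (fun l => (2 : ℂ)⁻¹ * φ (T l.1 * T l.2 - T l.2 * T l.1)) + (-φ 1) • singlet := by
    funext ⟨a, b⟩
    have h := congrArg φ (hT a b)
    simp only [map_add, map_smul, map_sub, smul_eq_mul] at h ⊢
    simp only [Pi.add_apply, Pi.smul_apply, smul_eq_mul]
    linear_combination (2 : ℂ)⁻¹ * h
  have hcommutator : M *ᵥ (fun l : Fin 3 × Fin 3 => (2 : ℂ)⁻¹ * φ (T l.1 * T l.2 - T l.2 * T l.1)) =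
      (-1 : ℂ) • _ :=
    M_mulVec_of_antisymm fun a b => by rw [← mul_neg, ← map_neg, neg_sub]
  rw [hdecomp, mulVec_add, mulVec_smul, H_mulVec_of_M_mulVec hcommutator,
    H_mulVec_of_M_mulVec M_mulVec_singlet]
  norm_num

lemma sum_H_smul_mul_eq_zero_of_anticomm
    (hT : ∀ a b, T a * T b + T b * T a = (-2 * singlet (a, b)) • 1) (m₁ m₂ : Fin 3) :
    ∑ l₁ : Fin 3, ∑ l₂ : Fin 3, H (m₁, m₂) (l₁, l₂) • (T l₁ * T l₂) = 0 := by
  rw [← Module.forall_dual_apply_eq_zero_iff ℂ]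
  intro φ
  simpa [mulVec, dotProduct, Fintype.sum_prod_type, map_sum, map_smul] using
    congrFun (H_mulVec_dual_mul_of_anticomm T hT φ) (m₁, m₂)

end Clifford

lemma B_eq :
    B = ![!![0, -(Real.sqrt 2 : ℂ); 0, 0], !![1, 0; 0, -1], !![0, 0; (Real.sqrt 2 : ℂ), 0]] := by
  funext a
  fin_cases a <;> ext i j <;> fin_cases i <;> fin_cases j <;> simp [B, X, Z] <;> field_simp <;>
    norm_num [ofReal_sqrt_two_sq]

lemma B_anticomm (a b : Fin 3) : B a * B b + B b * B a = (-2 * singlet (a, b)) • 1 := by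
  have h : (Real.sqrt 2 : ℂ) * Real.sqrt 2 = 2 := by rw [← sq, ofReal_sqrt_two_sq]
  fin_cases a <;> fin_cases b <;> ext i j <;> fin_cases i <;> fin_cases j <;>
    norm_num [B_eq, singlet, h]

/-- **local frustration-freeness of the AKLT chain.** For all `m₁ m₂ : Fin 3`,
`Σ_{l₁ l₂} H (m₁,m₂) (l₁,l₂) • (B l₁ · B l₂) = 0`. -/
theorem statement10 (m₁ m₂ : Fin 3) :
    ∑ l₁ : Fin 3, ∑ l₂ : Fin 3, H (m₁, m₂) (l₁, l₂) • (B l₁ * B l₂) = 0 :=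
  sum_H_smul_mul_eq_zero_of_anticomm B B_anticomm m₁ m₂
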